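/- arXiv:quant-ph/9812065 — 3 statements merged into one kernel-verified Lean document; each statement's English description precedes it below -/
import Mathlib

section
/- (Improved distance bound in Steane's construction.) Let C ⊆ C' be linear codes over F_2 of length n, let d be the minimum distance of C and let d'_2 be the second generalized distance of C', i.e., the minimum of |supp(u) ∪ supp(v)| over all pairs of distinct nonzero codewords u, v ∈ C'. Let W be an F_2-subspace of F_2^n with C ∩ W = {0} and C + W = C'. Let σ be a permutation of the n coordinates, with P denoting the induced linear map on F_2^n permuting coordinates by σ, and assume: C ∩ P(W) = {0}, C + P(W) = C', and for every nonzero c ∈ W one has c + P(c) ∉ C. Then for all a, b ∈ C and c ∈ W with (a + c, b + P(c)) ≠ (0, 0), the generalized weight |supp(a + c) ∪ supp(b + P(c))| is at least min(d, d'_2). -/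
/-- The support of a vector in `F_2^n`: the set of coordinates where it is nonzero. -/
def supp {n : ℕ} (u : Fin n → ZMod 2) : Finset (Fin n) :=
  Finset.univ.filter fun i => u i ≠ 0

/-- The linear map on `F_2^n` permuting coordinates by `σ`: it sends `u` to `i ↦ u (σ i)`. -/
def permMap {n : ℕ} (σ : Equiv.Perm (Fin n)) :
    (Fin n → ZMod 2) →ₗ[ZMod 2] (Fin n → ZMod 2) :=
  LinearMap.funLeft (ZMod 2) (ZMod 2) σ

/-!
If `c = 0` the pair `(a, b)` is a nonzero pair of codewords of `C`, so one of them already has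
weight at least `d`. If `c ≠ 0`, the two direct-sum decompositions `C ⊕ W = C' = C ⊕ P(W)` make
`a + c` and `b + P c` nonzero codewords of `C'`, and they are distinct because otherwise
`c + P c = a + b` would lie in `C`; so their joint support has size at least `d'₂`.
-/

lemma card_supp {n : ℕ} (u : Fin n → ZMod 2) : (supp u).card = hammingNorm u := rfl

lemma permMap_injective {n : ℕ} (σ : Equiv.Perm (Fin n)) : Function.Injective (permMap σ) :=
  LinearMap.funLeft_injective_of_surjective _ _ _ σ.surjective

section

variable {R M : Type*} [Ring R] [AddCommGroup M] [Module R M] {C W : Submodule R M} {a b c e : M}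

lemma Submodule.add_ne_zero_of_inf_eq_bot (hCW : C ⊓ W = ⊥) (ha : a ∈ C) (hc : c ∈ W)
    (hc0 : c ≠ 0) : a + c ≠ 0 := by
  intro h
  have hcC : c ∈ C := by simpa [eq_neg_of_add_eq_zero_right h] using C.neg_mem ha
  exact hc0 ((Submodule.mem_bot R).1 (hCW ▸ ⟨hcC, hc⟩))

lemma Submodule.sub_mem_of_add_eq_add (ha : a ∈ C) (hb : b ∈ C) (h : a + c = b + e) :
    c - e ∈ C := by
  have hce : c - e = b - a := by rw [sub_eq_sub_iff_add_eq_add, add_comm, h]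
  exact hce ▸ C.sub_mem hb ha

end

lemma le_card_supp_union_of_ne_zero {n d : ℕ} {C : Submodule (ZMod 2) (Fin n → ZMod 2)}
    (hd : ∀ u ∈ C, u ≠ 0 → d ≤ hammingNorm u) {a b : Fin n → ZMod 2} (ha : a ∈ C) (hb : b ∈ C)
    (hab : (a, b) ≠ (0, 0)) : d ≤ (supp a ∪ supp b).card := by
  obtain ha0 | hb0 : a ≠ 0 ∨ b ≠ 0 := by simpa only [ne_eq, Prod.mk.injEq, not_and_or] using hab
  · exact (hd a ha ha0).trans (card_supp a ▸ Finset.card_le_card Finset.subset_union_left)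
  · exact (hd b hb hb0).trans (card_supp b ▸ Finset.card_le_card Finset.subset_union_right)

/-- improved distance bound in Steane's construction: Let `C ⊆ C'` be
binary linear codes of length `n`, where every nonzero codeword of `C` has weight at
least `d`, and where `d'₂` is a lower bound on the second generalized distance of `C'`,
i.e. `|supp(u) ∪ supp(v)| ≥ d'₂` for all distinct nonzero `u, v ∈ C'`.  Let `W` be a
subspace with `C ∩ W = 0`, `C + W = C'`, let `P` be the coordinate permutation map
induced by `σ`, and assume `C ∩ P(W) = 0`, `C + P(W) = C'`, and `c + P(c) ∉ C` for every
nonzero `c ∈ W`.  Then every nonzero pair `(a + c, b + P c)` with `a, b ∈ C`, `c ∈ W` has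
generalized weight `|supp(a + c) ∪ supp(b + P c)| ≥ min(d, d'₂)`. -/
theorem steane_improved_distance_bound (n d d'₂ : ℕ)
    (C C' : Submodule (ZMod 2) (Fin n → ZMod 2)) (hCC' : C ≤ C')
    (hd : ∀ u ∈ C, u ≠ 0 → d ≤ hammingNorm u)
    (hd2 : ∀ u ∈ C', ∀ v ∈ C', u ≠ 0 → v ≠ 0 → u ≠ v →
      d'₂ ≤ (supp u ∪ supp v).card)
    (W : Submodule (ZMod 2) (Fin n → ZMod 2)) (σ : Equiv.Perm (Fin n))
    (hCW : C ⊓ W = ⊥) (hCWsum : C ⊔ W = C')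
    (hCPW : C ⊓ W.map (permMap σ) = ⊥) (hCPWsum : C ⊔ W.map (permMap σ) = C')
    (hfix : ∀ c ∈ W, c ≠ 0 → c + permMap σ c ∉ C) :
    ∀ a ∈ C, ∀ b ∈ C, ∀ c ∈ W, (a + c, b + permMap σ c) ≠ (0, 0) →
      min d d'₂ ≤ (supp (a + c) ∪ supp (b + permMap σ c)).card := by
  intro a ha b hb c hc hne
  rcases eq_or_ne c 0 with rfl | hc0
  · simp only [map_zero, add_zero] at hne ⊢
    exact (min_le_left _ _).trans (le_card_supp_union_of_ne_zero hd ha hb hne)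
  have hPc : permMap σ c ∈ W.map (permMap σ) := Submodule.mem_map_of_mem hc
  have hPc0 : permMap σ c ≠ 0 := (map_ne_zero_iff _ (permMap_injective σ)).2 hc0
  have hdistinct : a + c ≠ b + permMap σ c := fun h =>
    hfix c hc hc0 (ZModModule.sub_eq_add c _ ▸ C.sub_mem_of_add_eq_add ha hb h)
  refine (min_le_right _ _).trans (hd2 _ ?_ _ ?_ ?_ ?_ hdistinct)
  · exact C'.add_mem (hCC' ha) (hCWsum ▸ Submodule.mem_sup_right hc)
  · exact C'.add_mem (hCC' hb) (hCPWsum ▸ Submodule.mem_sup_right hPc)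
  · exact C.add_ne_zero_of_inf_eq_bot hCW ha hc hc0
  · exact C.add_ne_zero_of_inf_eq_bot hCPW hb hPc hPc0
end

section
/- Let ℓ be a natural number and let C1 ⊆ C3 be linear codes over F_2 of length n such that every nonzero codeword of C1 has Hamming weight at least 4ℓ + 4 and every nonzero codeword of C3 has Hamming weight at least 4ℓ + 2. Let x ∈ C3 and let C' = C1 ∪ (x + C1) (the union of C1 with a coset of C1 inside C3). Then for any two distinct nonzero elements u, v ∈ C', the size of supp(u) ∪ supp(v) is at least 6ℓ + 4; that is, the second generalized distance of C' is at least 6ℓ + 4. -/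
lemma supp_card_eq {n : ℕ} (u : Fin n → ZMod 2) : hammingNorm u = (supp u).card := rfl

lemma add_ne_zero_of_ne' {n : ℕ} {u v : Fin n → ZMod 2} (h : u ≠ v) : u + v ≠ 0 := by
  intro h0
  apply h
  funext i
  have h2 : ∀ a b : ZMod 2, a + b = 0 → a = b := by decide
  exact h2 _ _ (congrFun h0 i)

lemma two_mul_card_union {n : ℕ} (u v : Fin n → ZMod 2) :
    2 * (supp u ∪ supp v).card = hammingNorm u + hammingNorm v + hammingNorm (u + v) := by
  have hd : supp (u + v) = (supp u ∪ supp v) \ (supp u ∩ supp v) := by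
    ext i
    simp only [supp, Finset.mem_filter, Finset.mem_sdiff, Finset.mem_union,
      Finset.mem_inter, Finset.mem_univ, true_and, Pi.add_apply]
    have : ∀ a b : ZMod 2, (a + b ≠ 0 ↔ ((a ≠ 0 ∨ b ≠ 0) ∧ ¬(a ≠ 0 ∧ b ≠ 0))) := by decide
    exact this (u i) (v i)
  have hsub : supp u ∩ supp v ⊆ supp u ∪ supp v :=
    (Finset.inter_subset_left).trans Finset.subset_union_left
  have h1 := Finset.card_union_add_card_inter (supp u) (supp v)
  have h2 : (supp (u + v)).card = (supp u ∪ supp v).card - (supp u ∩ supp v).card := by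
    rw [hd, Finset.card_sdiff_of_subset hsub]
  have h3 := Finset.card_le_card hsub
  rw [supp_card_eq, supp_card_eq, supp_card_eq]
  omega

/-- Let `C1 ⊆ C3` be binary linear codes of length `n` such that every
nonzero codeword of `C1` has weight at least `4ℓ + 4` and every nonzero codeword of `C3`
has weight at least `4ℓ + 2`.  Let `x ∈ C3` and `C' = C1 ∪ (x + C1)`.  Then any two
distinct nonzero elements `u, v ∈ C'` satisfy `|supp(u) ∪ supp(v)| ≥ 6ℓ + 4`; that is,
the second generalized distance of `C'` is at least `6ℓ + 4`. -/
theorem union_coset_second_distance (n ℓ : ℕ)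
    (C1 C3 : Submodule (ZMod 2) (Fin n → ZMod 2)) (h13 : C1 ≤ C3)
    (h1 : ∀ u ∈ C1, u ≠ 0 → 4 * ℓ + 4 ≤ hammingNorm u)
    (h3 : ∀ u ∈ C3, u ≠ 0 → 4 * ℓ + 2 ≤ hammingNorm u)
    (x : Fin n → ZMod 2) (hx : x ∈ C3)
    (C' : Set (Fin n → ZMod 2))
    (hC' : C' = (C1 : Set (Fin n → ZMod 2)) ∪ {y | ∃ c ∈ C1, y = x + c}) :
    ∀ u ∈ C', ∀ v ∈ C', u ≠ 0 → v ≠ 0 → u ≠ v →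
      6 * ℓ + 4 ≤ (supp u ∪ supp v).card := by
  intro u hu v hv hu0 hv0 huv
  rw [hC'] at hu hv
  have key := two_mul_card_union u v
  have hadd0 : u + v ≠ 0 := add_ne_zero_of_ne' huv
  have hxx : x + x = 0 := by
    funext i
    have : ∀ a : ZMod 2, a + a = 0 := by decide
    exact this (x i)
  rcases hu with hu | ⟨c, hc, rfl⟩ <;> rcases hv with hv | ⟨d, hd, rfl⟩
  · -- both in C1
    have hwu := h1 u hu hu0
    have hwv := h1 v hv hv0
    have hwuv := h1 (u + v) (C1.add_mem hu hv) hadd0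
    omega
  · -- u ∈ C1, v = x + d
    have hwu := h1 u hu hu0
    have hvC3 : x + d ∈ C3 := C3.add_mem hx (h13 hd)
    have hwv := h3 _ hvC3 hv0
    have hwuv := h3 (u + (x + d)) (C3.add_mem (h13 hu) hvC3) hadd0
    omega
  · -- u = x + c, v ∈ C1
    have huC3 : x + c ∈ C3 := C3.add_mem hx (h13 hc)
    have hwu := h3 _ huC3 hu0
    have hwv := h1 v hv hv0
    have hwuv := h3 ((x + c) + v) (C3.add_mem huC3 (h13 hv)) hadd0
    omega
  · -- both in coset
    have huC3 : x + c ∈ C3 := C3.add_mem hx (h13 hc)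
    have hvC3 : x + d ∈ C3 := C3.add_mem hx (h13 hd)
    have hwu := h3 _ huC3 hu0
    have hwv := h3 _ hvC3 hv0
    have hsum : (x + c) + (x + d) = c + d := by
      rw [show (x + c) + (x + d) = (x + x) + (c + d) by ring, hxx, zero_add]
    have hwuv : 4 * ℓ + 4 ≤ hammingNorm ((x + c) + (x + d)) := by
      rw [hsum]
      exact h1 (c + d) (C1.add_mem hc hd) (by rw [← hsum]; exact hadd0)
    omega
end

section
/- For any d ≥ 1, the number of unordered pairs {u, v} of distinct nonzero vectors of F_2^n, each of even Hamming weight, such that |supp(u) ∪ supp(v)| ≤ d, is at most (1/8)·Σ_{t=1}^{d} C(n,t)·(3^t + 1), where C(n,t) denotes the binomial coefficient n choose t. -/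
/-!
Read an ordered pair `(u, v)` as the vector `i ↦ (u i, v i)` over the Klein four-group: both
weights are even iff this vector sums to zero, and its support is `supp u ∪ supp v`. Over any
finite abelian group of order `q`, the zero-sum vectors with support exactly a `t`-set number
`((q - 1)^t + (q - 1)(-1)^t) / q`, because deleting one coordinate of the support maps them
bijectively onto the vectors of nonzero sum supported on the remaining `t - 1` coordinates.
For `q = 4` this is `(3^t + 3(-1)^t) / 4`; for even `t` the diagonal pair `(1_S, 1_S)` is among
them, so at most `(3^t + 1) / 4` ordered pairs with `u ≠ v` have union exactly `S`. Summing over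
the `C(n, t)` sets `S` and halving for unordered pairs gives the bound.
-/

open Finset

theorem sum_update_eq_sub_add {ι G : Type*} [Fintype ι] [DecidableEq ι] [AddCommGroup G]
    (w : ι → G) (a : ι) (b : G) : ∑ i, Function.update w a b i = ∑ i, w i - w a + b := by
  rw [sum_update_of_mem (mem_univ a), ← sum_erase_add _ _ (mem_univ a), sdiff_singleton_eq_erase]
  abel

section ZeroSum

variable {ι G : Type*} [Fintype ι] [DecidableEq ι] [AddCommGroup G] [Fintype G] [DecidableEq G]

def withSupport (S : Finset ι) : Finset (ι → G) :=
  Fintype.piFinset fun i => if i ∈ S then {0}ᶜ else {0}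

theorem mem_withSupport {S : Finset ι} {w : ι → G} :
    w ∈ withSupport S ↔ ∀ i, w i ≠ 0 ↔ i ∈ S := by
  simp only [withSupport, Fintype.mem_piFinset]
  refine forall_congr' fun i => ?_
  split_ifs with h <;> simp [h]

theorem card_withSupport (S : Finset ι) :
    #(withSupport S : Finset (ι → G)) = (Fintype.card G - 1) ^ #S := by
  simp only [withSupport, Fintype.card_piFinset, apply_ite card, prod_ite, prod_const, card_compl,
    card_singleton, one_pow, mul_one, filter_univ_mem]

def zeroSumWithSupport (S : Finset ι) : Finset (ι → G) :=
  (withSupport S).filter fun w => ∑ i, w i = 0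

theorem card_zeroSumWithSupport_empty : #(zeroSumWithSupport ∅ : Finset (ι → G)) = 1 := by
  rw [card_eq_one]
  refine ⟨0, eq_singleton_iff_unique_mem.2 ⟨?_, fun w hw => ?_⟩⟩
  · simp [zeroSumWithSupport, mem_withSupport]
  · simp only [zeroSumWithSupport, mem_filter, mem_withSupport, notMem_empty, iff_false,
      not_not] at hw
    exact funext hw.1

theorem update_mem_withSupport_insert {a : ι} {S : Finset ι} {w : ι → G} {b : G}
    (hw : w ∈ withSupport S) (hb : b ≠ 0) :
    Function.update w a b ∈ withSupport (insert a S) := by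
  rw [mem_withSupport] at hw ⊢
  intro i
  rcases eq_or_ne i a with rfl | hi
  · simpa using hb
  · simp [hw i, hi]

theorem update_mem_withSupport_erase {a : ι} {S : Finset ι} {w : ι → G}
    (hw : w ∈ withSupport S) : Function.update w a 0 ∈ withSupport (S.erase a) := by
  rw [mem_withSupport] at hw ⊢
  intro i
  rcases eq_or_ne i a with rfl | hi
  · simp
  · simp [hw i, hi]

theorem card_zeroSumWithSupport_insert {a : ι} {S : Finset ι} (ha : a ∉ S) :
    #(zeroSumWithSupport (insert a S) : Finset (ι → G))
      + #(zeroSumWithSupport S : Finset (ι → G)) = (Fintype.card G - 1) ^ #S := by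
  have hzero {w : ι → G} (hw : w ∈ withSupport S) : w a = 0 := by
    by_contra h; exact ha ((mem_withSupport.1 hw a).1 h)
  have hbij : #(zeroSumWithSupport (insert a S) : Finset (ι → G))
      = #((withSupport S).filter fun w : ι → G => ¬∑ i, w i = 0) := by
    refine card_nbij' (fun w => Function.update w a 0) (fun w => Function.update w a (-∑ i, w i))
      (fun w hw => ?_) (fun w hw => ?_) (fun w hw => ?_) (fun w hw => ?_)
    all_goals simp only [coe_filter, zeroSumWithSupport, Set.mem_ofPred_eq] at hw ⊢
    · have hwa : w a ≠ 0 := (mem_withSupport.1 hw.1 a).2 (mem_insert_self a S)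
      refine ⟨by simpa [ha] using update_mem_withSupport_erase (a := a) hw.1, ?_⟩
      simpa [sum_update_eq_sub_add, hw.2] using hwa
    · refine ⟨update_mem_withSupport_insert hw.1 (neg_ne_zero.2 hw.2), ?_⟩
      simp [sum_update_eq_sub_add, hzero hw.1]
    · simp [sum_update_eq_sub_add, hw.2]
    · simp [hzero hw.1]
  rw [hbij, add_comm, zeroSumWithSupport, card_filter_add_card_filter_not, card_withSupport]

theorem card_mul_card_zeroSumWithSupport (S : Finset ι) :
    (Fintype.card G : ℤ) * #(zeroSumWithSupport S : Finset (ι → G))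
      = ((Fintype.card G : ℤ) - 1) ^ #S + ((Fintype.card G : ℤ) - 1) * (-1) ^ #S := by
  induction S using Finset.induction_on with
  | empty => simp [card_zeroSumWithSupport_empty]
  | insert a S ha ih =>
    have h := card_zeroSumWithSupport_insert (G := G) ha
    zify [Fintype.card_pos (α := G)] at h
    rw [card_insert_of_notMem ha]
    linear_combination (Fintype.card G : ℤ) * h - ih

end ZeroSum

theorem SimpleGraph.edgeSet_eq_setOf_exists_adj {V : Type*} (G : SimpleGraph V) :
    G.edgeSet = {p | ∃ u v, p = s(u, v) ∧ G.Adj u v} := by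
  ext p
  induction p using Sym2.ind with
  | _ u v =>
    refine ⟨fun h => ⟨u, v, rfl, h⟩, ?_⟩
    rintro ⟨u', v', hp, h⟩
    rwa [hp]

theorem SimpleGraph.two_mul_card_edgeFinset_eq_card_filter_adj {V : Type*} [Fintype V]
    [DecidableEq V] (G : SimpleGraph V) [DecidableRel G.Adj] :
    2 * #G.edgeFinset = #(univ.filter fun p : V × V => G.Adj p.1 p.2) := by
  rw [← G.dart_card_eq_twice_card_edges, ← Fintype.card_subtype]
  exact Fintype.card_congr ⟨fun d => ⟨d.toProd, d.adj⟩, fun p => ⟨p.1, p.2⟩, fun _ => rfl,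
    fun _ => rfl⟩

theorem Finset.sum_filter_card_mem {ι M : Type*} [Fintype ι] [AddCommMonoid M] (s : Finset ℕ)
    (f : ℕ → M) :
    ∑ S ∈ univ.filter (fun S : Finset ι => #S ∈ s), f #S
      = ∑ t ∈ s, (Fintype.card ι).choose t • f t := by
  rw [← sum_fiberwise_of_maps_to (g := card) (t := s) fun S hS => (mem_filter.1 hS).2]
  refine sum_congr rfl fun t ht => ?_
  have : (univ.filter fun S : Finset ι => #S ∈ s).filter (#· = t) = powersetCard t univ := by
    ext S; simp +contextual [ht]
  rw [this, sum_congr rfl fun S hS => by rw [(mem_powersetCard.1 hS).2], sum_const,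
    card_powersetCard, card_univ]

theorem ZMod.even_hammingNorm_iff_sum_eq_zero {ι : Type*} [Fintype ι] (u : ι → ZMod 2) :
    Even (hammingNorm u) ↔ ∑ i, u i = 0 := by
  have hone : ∀ x : ZMod 2, x ≠ 0 → x = 1 := by decide
  rw [← ZMod.natCast_eq_zero_iff_even, hammingNorm, ← sum_filter_ne_zero,
    sum_congr rfl fun i hi => hone _ (mem_filter.1 hi).2, sum_const, nsmul_one]

section EvenPairs

variable {n : ℕ}

def evenPairsWithUnion (S : Finset (Fin n)) : Finset ((Fin n → ZMod 2) × (Fin n → ZMod 2)) :=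
  univ.filter fun p =>
    Even (hammingNorm p.1) ∧ Even (hammingNorm p.2) ∧ supp p.1 ∪ supp p.2 = S

theorem card_evenPairsWithUnion (S : Finset (Fin n)) :
    #(evenPairsWithUnion S) = #(zeroSumWithSupport S : Finset (Fin n → ZMod 2 × ZMod 2)) := by
  refine card_equiv (Equiv.arrowProdEquivProdArrow _ _ _).symm fun p => ?_
  simp only [evenPairsWithUnion, zeroSumWithSupport, mem_filter, mem_univ, true_and,
    mem_withSupport, ZMod.even_hammingNorm_iff_sum_eq_zero, Finset.ext_iff, mem_union, supp,
    Equiv.arrowProdEquivProdArrow, Equiv.coe_fn_symm_mk, Prod.ext_iff, Prod.fst_sum,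
    Prod.snd_sum, Prod.fst_zero, Prod.snd_zero, ne_eq, not_and_or]
  tauto

theorem four_mul_card_evenPairsWithUnion (S : Finset (Fin n)) :
    (4 : ℤ) * #(evenPairsWithUnion S) = 3 ^ #S + 3 * (-1) ^ #S := by
  have h := card_mul_card_zeroSumWithSupport (G := ZMod 2 × ZMod 2) S
  norm_num [Fintype.card_prod, ZMod.card] at h
  rwa [card_evenPairsWithUnion]

theorem four_mul_card_evenPairsWithUnion_filter_ne_le (S : Finset (Fin n)) :
    4 * #((evenPairsWithUnion S).filter fun p => p.1 ≠ p.2) ≤ 3 ^ #S + 1 := by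
  have h := four_mul_card_evenPairsWithUnion S
  rcases Nat.even_or_odd #S with hS | hS
  · let χ : Fin n → ZMod 2 := fun i => if i ∈ S then 1 else 0
    have hχ : supp χ = S := by ext i; by_cases hi : i ∈ S <;> simp [supp, χ, hi]
    have hdiag : (χ, χ) ∈ evenPairsWithUnion S := by
      have : Even (hammingNorm χ) := by change Even #(supp χ); rwa [hχ]
      simp [evenPairsWithUnion, hχ, this]
    have hlt : #((evenPairsWithUnion S).filter fun p => p.1 ≠ p.2) < #(evenPairsWithUnion S) :=
      card_lt_card (filter_ssubset.2 ⟨_, hdiag, fun h => h rfl⟩)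
    rw [hS.neg_one_pow] at h
    zify at hlt ⊢; linarith
  · rw [hS.neg_one_pow] at h
    have := card_filter_le (evenPairsWithUnion S) fun p => p.1 ≠ p.2
    zify; linarith

end EvenPairs

theorem supp_nonempty {n : ℕ} {u : Fin n → ZMod 2} (hu : u ≠ 0) : (supp u).Nonempty := by
  obtain ⟨i, hi⟩ := Function.ne_iff.1 hu
  exact ⟨i, by simpa [supp] using hi⟩

def smallEvenGraph (n d : ℕ) : SimpleGraph (Fin n → ZMod 2) where
  Adj u v := u ≠ v ∧ u ≠ 0 ∧ v ≠ 0 ∧ Even (hammingNorm u) ∧ Even (hammingNorm v) ∧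
    #(supp u ∪ supp v) ≤ d
  symm := ⟨fun _ _ h =>
    ⟨h.1.symm, h.2.2.1, h.2.1, h.2.2.2.2.1, h.2.2.2.1, union_comm (supp _) _ ▸ h.2.2.2.2.2⟩⟩
  loopless := ⟨fun _ h => h.1 rfl⟩

theorem card_filter_smallEvenGraph_adj_le (n d : ℕ) [DecidableRel (smallEvenGraph n d).Adj] :
    #(univ.filter fun p : (Fin n → ZMod 2) × (Fin n → ZMod 2) =>
        (smallEvenGraph n d).Adj p.1 p.2)
      ≤ ∑ S ∈ univ.filter (fun S : Finset (Fin n) => #S ∈ Icc 1 d),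
          #((evenPairsWithUnion S).filter fun p => p.1 ≠ p.2) := by
  refine (card_le_card fun p hp => ?_).trans card_biUnion_le
  obtain ⟨hne, hu, -, heven₁, heven₂, hd⟩ := (mem_filter.1 hp).2
  refine mem_biUnion.2 ⟨supp p.1 ∪ supp p.2, ?_, ?_⟩
  · have := ((supp_nonempty hu).mono (subset_union_left (s₂ := supp p.2))).card_pos
    simp only [mem_filter, mem_univ, mem_Icc, true_and]
    omega
  · simp [evenPairsWithUnion, heven₁, heven₂, hne]

theorem count_pairs_with_small_or_general (n d : ℕ) :
    8 * Set.ncard {p : Sym2 (Fin n → ZMod 2) |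
        ∃ u v : Fin n → ZMod 2, p = s(u, v) ∧ u ≠ v ∧ u ≠ 0 ∧ v ≠ 0 ∧
          Even (hammingNorm u) ∧ Even (hammingNorm v) ∧
          (supp u ∪ supp v).card ≤ d}
      ≤ ∑ t ∈ Finset.Icc 1 d, n.choose t * (3 ^ t + 1) := by
  classical
  calc 8 * Set.ncard _ = 8 * #(smallEvenGraph n d).edgeFinset := by
        rw [← Set.ncard_coe_finset, SimpleGraph.coe_edgeFinset,
          SimpleGraph.edgeSet_eq_setOf_exists_adj]
        rfl
    _ = 4 * (2 * #(smallEvenGraph n d).edgeFinset) := by ring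
    _ ≤ 4 * ∑ S ∈ univ.filter (fun S : Finset (Fin n) => #S ∈ Icc 1 d),
          #((evenPairsWithUnion S).filter fun p => p.1 ≠ p.2) := by
        rw [SimpleGraph.two_mul_card_edgeFinset_eq_card_filter_adj]
        gcongr
        exact card_filter_smallEvenGraph_adj_le n d
    _ ≤ ∑ S ∈ univ.filter (fun S : Finset (Fin n) => #S ∈ Icc 1 d), (3 ^ #S + 1) := by
        rw [mul_sum]
        exact sum_le_sum fun S _ => four_mul_card_evenPairsWithUnion_filter_ne_le S
    _ = ∑ t ∈ Icc 1 d, n.choose t * (3 ^ t + 1) := by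
        rw [sum_filter_card_mem (f := fun t => 3 ^ t + 1), Fintype.card_fin]
        rfl

/-- For `d ≥ 1`, the number of unordered pairs `{u, v}` of distinct nonzero
vectors of `F_2^n`, each of even Hamming weight, with `|supp(u) ∪ supp(v)| ≤ d`, is at
most `(1/8)·Σ_{t=1}^{d} C(n,t)·(3^t + 1)`, stated as: 8 times the number of such pairs
is at most `Σ_{t=1}^{d} C(n,t)·(3^t + 1)`. -/
theorem count_pairs_with_small_or (n d : ℕ) (hd : 1 ≤ d) :
    8 * Set.ncard {p : Sym2 (Fin n → ZMod 2) |
        ∃ u v : Fin n → ZMod 2, p = s(u, v) ∧ u ≠ v ∧ u ≠ 0 ∧ v ≠ 0 ∧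
          Even (hammingNorm u) ∧ Even (hammingNorm v) ∧
          (supp u ∪ supp v).card ≤ d}
      ≤ ∑ t ∈ Finset.Icc 1 d, n.choose t * (3 ^ t + 1) :=
  count_pairs_with_small_or_general n d
end
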